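/- arXiv:2112.09899 — 2 statements merged into one kernel-verified Lean document; each statement's English description precedes it below -/
import Mathlib

section
/- Let G, Y, G_n, G_N be random variables on a probability space taking values in nonempty finite types, and let G_sub = f ∘ G_N for a measurable function f (the subgraph obtained by dropping the noise-injected part of the perturbed graph G_N). Assume (i) G_n is independent of Y, and (ii) the pair (Y, G_n) is conditionally independent of G_N given G. Then I[G_sub : G_n] ≤ I[G_N : G_n] ≤ I[G_N : G] − I[G_N : Y]. (Paper's Theorem 1.) -/
/-!
Both inequalities are data-processing inequalities. They rest on the decomposition
`I[A : B | C] = ∑ c, P(C = c) I[A : B]_{μ[|C = c]}` of conditional mutual information: it is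
nonnegative because entropy is subadditive (concavity of `negMulLog`), and it vanishes when `A`
and `B` are conditionally independent given `C`, since every conditional measure `μ[|C = c]` then
makes `A` and `B` independent. The second inequality chains
`I[G_N : Y] + I[G_N : G_n] ≤ I[G_N : (Y, G_n)]`, which holds because `G_n ⟂ Y`, with
`I[G_N : (Y, G_n)] ≤ I[G_N : G]` along the Markov chain `(Y, G_n) - G - G_N`.
-/

open MeasureTheory ProbabilityTheory Real

/-- Shannon entropy (in nats) of a random variable `X` taking values in a finite type,
computed with respect to the measure `μ`: `H[X] = ∑ s, -p s * log (p s)` where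
`p s = μ (X ⁻¹' {s})`. -/
noncomputable def entropy {Ω S : Type*} [MeasurableSpace Ω] [Fintype S]
    (μ : Measure Ω) (X : Ω → S) : ℝ :=
  ∑ s : S, Real.negMulLog ((μ (X ⁻¹' {s})).toReal)

/-- Mutual information `I[X : Y] = H[X] + H[Y] - H[⟨X, Y⟩]`. -/
noncomputable def mutualInfo {Ω S T : Type*} [MeasurableSpace Ω] [Fintype S] [Fintype T]
    (μ : Measure Ω) (X : Ω → S) (Y : Ω → T) : ℝ :=
  entropy μ X + entropy μ Y - entropy μ (fun ω => (X ω, Y ω))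

open Finset

section CondIndepFun

variable {Ω γ : Type*} {mΩ : MeasurableSpace Ω}
  [MeasurableSpace γ] [MeasurableSingletonClass γ] {μ : Measure Ω} [IsFiniteMeasure μ]
  {C : Ω → γ} {c : γ}

lemma measureReal_mul_cond {s : Set Ω} (hs : MeasurableSet s) (t : Set Ω) :
    μ.real s * μ[|s].real t = μ.real (s ∩ t) := by
  simp only [measureReal_def, ← ENNReal.toReal_mul, mul_comm (μ s), cond_mul_eq_inter hs]

lemma condExp_comap_eq_cond_of_mem (hC : Measurable C) {T : Set Ω} (hT : MeasurableSet T)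
    (hc : μ (C ⁻¹' {c}) ≠ 0) {ω : Ω} (hω : C ω = c) :
    (μ⟦T | MeasurableSpace.comap C inferInstance⟧) ω = μ[|C ⁻¹' {c}].real T := by
  set S := C ⁻¹' {c}
  set P := μ⟦T | MeasurableSpace.comap C inferInstance⟧
  have hS : MeasurableSet S := hC (measurableSet_singleton c)
  have hconst : ∀ ω' ∈ S, P ω' = P ω :=
    fun ω' hω' => stronglyMeasurable_condExp.factorsThrough (hω'.trans hω.symm)
  have hint : μ.real S * P ω = μ.real (S ∩ T) := by
    rw [← smul_eq_mul, ← setIntegral_const, ← setIntegral_congr_fun hS hconst,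
      setIntegral_condExp hC.comap_le ((integrable_const (1 : ℝ)).indicator hT)
        ⟨{c}, measurableSet_singleton c, rfl⟩,
      integral_indicator_const _ hT, measureReal_restrict_apply hT, smul_eq_mul, mul_one,
      Set.inter_comm]
  have hS0 : μ.real S ≠ 0 := (measureReal_ne_zero_iff (measure_ne_top μ S)).2 hc
  rw [← measureReal_mul_cond hS] at hint
  exact mul_left_cancel₀ hS0 hint

lemma ProbabilityTheory.CondIndepFun.indepFun_cond_preimage_singleton
    [StandardBorelSpace Ω] {α β : Type*} [MeasurableSpace α] [MeasurableSpace β]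
    {A : Ω → α} {B : Ω → β}
    (hA : Measurable A) (hB : Measurable B) (hC : Measurable C)
    (h : CondIndepFun (MeasurableSpace.comap C inferInstance) hC.comap_le A B μ)
    (hc : μ (C ⁻¹' {c}) ≠ 0) :
    IndepFun A B μ[|C ⁻¹' {c}] := by
  have hS : MeasurableSet (C ⁻¹' {c}) := hC (measurableSet_singleton c)
  have := cond_isProbabilityMeasure hc
  rw [indepFun_iff_measure_inter_preimage_eq_mul]
  intro s t hs ht
  have hfactor := (condIndepFun_iff_condExp_inter_preimage_eq_mul hA hB).1 h s t hs ht
  -- The a.e. factorization holds at some point of the non-null atom `C ⁻¹' {c}`, where every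
  -- factor is a conditional probability given that atom.
  have : (ae (μ.restrict (C ⁻¹' {c}))).NeBot := ae_neBot.2 (by simpa using hc)
  obtain ⟨ω, hωfactor, hω⟩ := ((ae_restrict_of_ae hfactor).and (ae_restrict_mem hS)).exists
  simp only [condExp_comap_eq_cond_of_mem hC ((hA hs).inter (hB ht)) hc hω,
    condExp_comap_eq_cond_of_mem hC (hA hs) hc hω,
    condExp_comap_eq_cond_of_mem hC (hB ht) hc hω] at hωfactor
  rw [measureReal_def, measureReal_def, measureReal_def, ← ENNReal.toReal_mul] at hωfactor
  exact (ENNReal.toReal_eq_toReal_iff' (measure_ne_top _ _) (by finiteness)).1 hωfactor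

end CondIndepFun

section Entropy

variable {Ω α β γ : Type*} [MeasurableSpace Ω] {μ : Measure Ω}

lemma entropy_eq_sum_negMulLog_measureReal [Fintype α] (μ : Measure Ω) (X : Ω → α) :
    entropy μ X = ∑ x, negMulLog (μ.real (X ⁻¹' {x})) := rfl

lemma entropy_comp_of_injective [Fintype α] [Fintype β] (μ : Measure Ω) (X : Ω → α)
    {e : α → β} (he : Function.Injective e) :
    entropy μ (e ∘ X) = entropy μ X := by
  refine (Fintype.sum_of_injective e he _ _ (fun y hy => ?_) (fun x => ?_)).symm
  · have : (e ∘ X) ⁻¹' {y} = ∅ :=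
      Set.eq_empty_of_forall_notMem fun ω hω => hy ⟨X ω, hω⟩
    simp [this]
  · rw [Set.preimage_comp, ← Set.image_singleton, he.preimage_image]

lemma entropy_prod_comm [Fintype α] [Fintype β] (μ : Measure Ω) (X : Ω → α) (Y : Ω → β) :
    entropy μ (fun ω => (X ω, Y ω)) = entropy μ (fun ω => (Y ω, X ω)) :=
  (entropy_comp_of_injective μ _ Prod.swap_injective).symm

lemma mutualInfo_comm [Fintype α] [Fintype β] (μ : Measure Ω) (X : Ω → α) (Y : Ω → β) :
    mutualInfo μ X Y = mutualInfo μ Y X := by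
  rw [mutualInfo, mutualInfo, entropy_prod_comm]
  ring

lemma entropy_prod_comp_self [Fintype α] [Fintype β] (μ : Measure Ω) (X : Ω → α) (f : α → β) :
    entropy μ (fun ω => (X ω, f (X ω))) = entropy μ X :=
  entropy_comp_of_injective μ X (e := fun x => (x, f x)) fun _ _ h => congrArg Prod.fst h

lemma measureReal_preimage_prod_singleton (X : Ω → α) (Z : Ω → γ) (x : α) (z : γ) :
    μ.real ((fun ω => (X ω, Z ω)) ⁻¹' {(x, z)}) = μ.real (Z ⁻¹' {z} ∩ X ⁻¹' {x}) := by
  congr 1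
  ext ω
  simp [and_comm]

variable [Fintype α] [MeasurableSpace α] [MeasurableSingletonClass α]
  [Fintype γ] [MeasurableSpace γ] [MeasurableSingletonClass γ] {X : Ω → α} {Z : Ω → γ}

lemma sum_measureReal_preimage_singleton_eq_one [IsProbabilityMeasure μ] (hX : Measurable X) :
    ∑ x, μ.real (X ⁻¹' {x}) = 1 := by
  rw [sum_measureReal_preimage_singleton _ fun x _ => hX (measurableSet_singleton x)]
  simp

lemma sum_measureReal_preimage_singleton_inter [IsFiniteMeasure μ] (hZ : Measurable Z)
    (s : Set Ω) :
    ∑ z, μ.real (Z ⁻¹' {z} ∩ s) = μ.real s := by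
  simp_rw [← measureReal_restrict_apply (hZ (measurableSet_singleton _))]
  rw [sum_measureReal_preimage_singleton _ fun z _ => hZ (measurableSet_singleton z)]
  simp

lemma entropy_prod_eq_add_sum_cond [IsFiniteMeasure μ] (hX : Measurable X)
    (hZ : Measurable Z) :
    entropy μ (fun ω => (X ω, Z ω))
      = entropy μ Z + ∑ z, μ.real (Z ⁻¹' {z}) * entropy μ[|Z ⁻¹' {z}] X := by
  have hmass (x : α) (z : γ) : μ.real ((fun ω => (X ω, Z ω)) ⁻¹' {(x, z)})
      = μ.real (Z ⁻¹' {z}) * μ[|Z ⁻¹' {z}].real (X ⁻¹' {x}) := by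
    rw [measureReal_mul_cond (hZ (measurableSet_singleton z)),
      measureReal_preimage_prod_singleton]
  have hcond_mass (z : γ) :
      (∑ x, μ[|Z ⁻¹' {z}].real (X ⁻¹' {x})) * negMulLog (μ.real (Z ⁻¹' {z}))
        = negMulLog (μ.real (Z ⁻¹' {z})) := by
    rcases eq_or_ne (μ (Z ⁻¹' {z})) 0 with hz | hz
    · simp [measureReal_def, hz]
    · have := cond_isProbabilityMeasure hz
      rw [sum_measureReal_preimage_singleton_eq_one hX, one_mul]
  simp only [entropy_eq_sum_negMulLog_measureReal, Fintype.sum_prod_type_right, hmass,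
    negMulLog_mul, sum_add_distrib, ← sum_mul, ← mul_sum, hcond_mass]

/-- By concavity of `negMulLog`, the conditional entropies `H[X | Z = z]` average to at most
`H[X]`. -/
lemma entropy_prod_le_add [IsProbabilityMeasure μ] (hX : Measurable X) (hZ : Measurable Z) :
    entropy μ (fun ω => (X ω, Z ω)) ≤ entropy μ X + entropy μ Z := by
  rw [entropy_prod_eq_add_sum_cond hX hZ, add_comm (entropy μ X)]
  gcongr
  calc ∑ z, μ.real (Z ⁻¹' {z}) * entropy μ[|Z ⁻¹' {z}] X
      = ∑ x, ∑ z, μ.real (Z ⁻¹' {z}) • negMulLog (μ[|Z ⁻¹' {z}].real (X ⁻¹' {x})) := by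
        simp_rw [entropy_eq_sum_negMulLog_measureReal, mul_sum, smul_eq_mul]
        exact sum_comm
    _ ≤ ∑ x, negMulLog (∑ z, μ.real (Z ⁻¹' {z}) • μ[|Z ⁻¹' {z}].real (X ⁻¹' {x})) :=
        sum_le_sum fun x _ => concaveOn_negMulLog.le_map_sum (fun _ _ => measureReal_nonneg)
          (sum_measureReal_preimage_singleton_eq_one hZ) fun _ _ => measureReal_nonneg
    _ = entropy μ X := by
        simp_rw [smul_eq_mul, measureReal_mul_cond (hZ (measurableSet_singleton _)),
          sum_measureReal_preimage_singleton_inter hZ]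
        rfl

lemma ProbabilityTheory.IndepFun.entropy_prod_eq_add [IsProbabilityMeasure μ]
    (hX : Measurable X) (hZ : Measurable Z) (h : IndepFun X Z μ) :
    entropy μ (fun ω => (X ω, Z ω)) = entropy μ X + entropy μ Z := by
  have hmass (x : α) (z : γ) : μ.real ((fun ω => (X ω, Z ω)) ⁻¹' {(x, z)})
      = μ.real (X ⁻¹' {x}) * μ.real (Z ⁻¹' {z}) := by
    rw [measureReal_preimage_prod_singleton, Set.inter_comm, measureReal_def, measureReal_def,
      measureReal_def, h.measure_inter_preimage_eq_mul _ _ (measurableSet_singleton x)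
        (measurableSet_singleton z), ENNReal.toReal_mul]
  simp only [entropy_eq_sum_negMulLog_measureReal, Fintype.sum_prod_type, hmass, negMulLog_mul,
    sum_add_distrib, ← sum_mul, ← mul_sum, sum_measureReal_preimage_singleton_eq_one hX,
    sum_measureReal_preimage_singleton_eq_one hZ, one_mul]

end Entropy

section MutualInfo

variable {Ω α β γ : Type*} [MeasurableSpace Ω] {μ : Measure Ω}
  [Fintype α] [MeasurableSpace α] [MeasurableSingletonClass α]
  [Fintype β] [MeasurableSpace β] [MeasurableSingletonClass β]
  [Fintype γ] [MeasurableSpace γ] [MeasurableSingletonClass γ]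
  {X : Ω → α} {Y : Ω → β} {Z : Ω → γ}

lemma mutualInfo_nonneg [IsProbabilityMeasure μ] (hX : Measurable X) (hY : Measurable Y) :
    0 ≤ mutualInfo μ X Y := by
  have := entropy_prod_le_add (μ := μ) hX hY
  rw [mutualInfo]
  linarith

lemma ProbabilityTheory.IndepFun.mutualInfo_eq_zero [IsProbabilityMeasure μ]
    (hX : Measurable X) (hY : Measurable Y) (h : IndepFun X Y μ) :
    mutualInfo μ X Y = 0 := by
  rw [mutualInfo, h.entropy_prod_eq_add hX hY]
  ring

noncomputable def condMutualInfo (μ : Measure Ω) (X : Ω → α) (Y : Ω → β) (Z : Ω → γ) : ℝ :=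
  entropy μ (fun ω => (X ω, Z ω)) + entropy μ (fun ω => (Y ω, Z ω))
    - entropy μ (fun ω => ((X ω, Y ω), Z ω)) - entropy μ Z

lemma condMutualInfo_eq_sum_cond [IsFiniteMeasure μ] (hX : Measurable X) (hY : Measurable Y)
    (hZ : Measurable Z) :
    condMutualInfo μ X Y Z = ∑ z, μ.real (Z ⁻¹' {z}) * mutualInfo μ[|Z ⁻¹' {z}] X Y := by
  simp only [condMutualInfo, mutualInfo, entropy_prod_eq_add_sum_cond hX hZ,
    entropy_prod_eq_add_sum_cond hY hZ, entropy_prod_eq_add_sum_cond (hX.prodMk hY) hZ, mul_sub,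
    mul_add, sum_sub_distrib, sum_add_distrib]
  ring

lemma condMutualInfo_nonneg [IsFiniteMeasure μ] (hX : Measurable X) (hY : Measurable Y)
    (hZ : Measurable Z) : 0 ≤ condMutualInfo μ X Y Z := by
  rw [condMutualInfo_eq_sum_cond hX hY hZ]
  refine sum_nonneg fun z _ => ?_
  rcases eq_or_ne (μ (Z ⁻¹' {z})) 0 with hz | hz
  · simp [measureReal_def, hz]
  · have := cond_isProbabilityMeasure hz
    exact mul_nonneg measureReal_nonneg (mutualInfo_nonneg hX hY)

lemma ProbabilityTheory.CondIndepFun.condMutualInfo_eq_zero [StandardBorelSpace Ω]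
    [IsFiniteMeasure μ] (hX : Measurable X) (hY : Measurable Y) (hZ : Measurable Z)
    (h : CondIndepFun (MeasurableSpace.comap Z inferInstance) hZ.comap_le X Y μ) :
    condMutualInfo μ X Y Z = 0 := by
  rw [condMutualInfo_eq_sum_cond hX hY hZ]
  refine sum_eq_zero fun z _ => ?_
  rcases eq_or_ne (μ (Z ⁻¹' {z})) 0 with hz | hz
  · simp [measureReal_def, hz]
  · have := cond_isProbabilityMeasure hz
    rw [(h.indepFun_cond_preimage_singleton hX hY hZ hz).mutualInfo_eq_zero hX hY, mul_zero]

end MutualInfo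

section DataProcessing

variable {Ω α β γ : Type*} [MeasurableSpace Ω] {μ : Measure Ω}
  [Fintype α] [MeasurableSpace α] [MeasurableSingletonClass α]
  [Fintype β] [MeasurableSpace β] [MeasurableSingletonClass β]
  [Fintype γ] [MeasurableSpace γ] [MeasurableSingletonClass γ]
  {X : Ω → α} {Y : Ω → β} {Z : Ω → γ}

/-- From `I[X : Y | f ∘ X] ≥ 0`. -/
lemma mutualInfo_comp_le [IsFiniteMeasure μ] (hX : Measurable X) (hY : Measurable Y)
    {f : α → γ} (hf : Measurable f) :
    mutualInfo μ (f ∘ X) Y ≤ mutualInfo μ X Y := by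
  have hcmi := condMutualInfo_nonneg (μ := μ) hX hY (hf.comp hX)
  have hXY : entropy μ (fun ω => ((X ω, Y ω), f (X ω))) = entropy μ (fun ω => (X ω, Y ω)) :=
    entropy_prod_comp_self μ (fun ω => (X ω, Y ω)) fun p => f p.1
  rw [condMutualInfo, Function.comp_def, entropy_prod_comp_self, hXY,
    entropy_prod_comm μ Y] at hcmi
  rw [mutualInfo, mutualInfo, Function.comp_def]
  linarith

/-- Data processing along the Markov chain `Y - Z - X`. -/
lemma mutualInfo_le_of_condIndepFun [StandardBorelSpace Ω] [IsFiniteMeasure μ]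
    (hX : Measurable X) (hY : Measurable Y) (hZ : Measurable Z)
    (h : CondIndepFun (MeasurableSpace.comap Z inferInstance) hZ.comap_le Y X μ) :
    mutualInfo μ X Y ≤ mutualInfo μ X Z := by
  have hmarkov := h.condMutualInfo_eq_zero hY hX hZ
  have hcmi := condMutualInfo_nonneg (μ := μ) hX hZ hY
  have hreorder :
      entropy μ (fun ω => ((X ω, Z ω), Y ω)) = entropy μ (fun ω => ((Y ω, X ω), Z ω)) :=
    entropy_comp_of_injective μ (fun ω => ((Y ω, X ω), Z ω))
      (e := fun p => ((p.1.2, p.2), p.1.1)) fun p q h => by simp_all [Prod.ext_iff]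
  rw [condMutualInfo] at hmarkov hcmi
  rw [hreorder, entropy_prod_comm μ Z Y] at hcmi
  rw [mutualInfo, mutualInfo]
  linarith

lemma mutualInfo_add_le_mutualInfo_prod_of_indepFun [IsProbabilityMeasure μ]
    (hX : Measurable X) (hY : Measurable Y) (hZ : Measurable Z) (h : IndepFun Y Z μ) :
    mutualInfo μ X Y + mutualInfo μ X Z ≤ mutualInfo μ X (fun ω => (Y ω, Z ω)) := by
  have hcmi := condMutualInfo_nonneg (μ := μ) hY hZ hX
  have hindep := h.mutualInfo_eq_zero hY hZ
  rw [condMutualInfo] at hcmi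
  rw [mutualInfo] at hindep
  rw [mutualInfo_comm μ X, mutualInfo_comm μ X, mutualInfo_comm μ X, mutualInfo, mutualInfo,
    mutualInfo]
  linarith

end DataProcessing

theorem theorem1_perturbed_graph_info_bound_general
    {Ω : Type*} [MeasurableSpace Ω] [StandardBorelSpace Ω]
    (μ : Measure Ω) [IsProbabilityMeasure μ]
    {SG SY Sn SN Ssub : Type*}
    [Fintype SG] [MeasurableSpace SG] [DiscreteMeasurableSpace SG]
    [Fintype SY] [MeasurableSpace SY] [DiscreteMeasurableSpace SY]
    [Fintype Sn] [MeasurableSpace Sn] [DiscreteMeasurableSpace Sn]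
    [Fintype SN] [MeasurableSpace SN] [DiscreteMeasurableSpace SN]
    [Fintype Ssub] [MeasurableSpace Ssub] [DiscreteMeasurableSpace Ssub]
    (G : Ω → SG) (Y : Ω → SY) (Gn : Ω → Sn) (GN : Ω → SN) (f : SN → Ssub)
    (hG : Measurable G) (hY : Measurable Y) (hGn : Measurable Gn) (hGN : Measurable GN)
    (hf : Measurable f)
    (hindep : IndepFun Gn Y μ)
    (hcond : CondIndepFun (MeasurableSpace.comap G inferInstance) hG.comap_le
      (fun ω => (Y ω, Gn ω)) GN μ) :
    mutualInfo μ (f ∘ GN) Gn ≤ mutualInfo μ GN Gn ∧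
      mutualInfo μ GN Gn ≤ mutualInfo μ GN G - mutualInfo μ GN Y := by
  refine ⟨mutualInfo_comp_le hGN hGn hf, ?_⟩
  have hsplit := mutualInfo_add_le_mutualInfo_prod_of_indepFun hGN hY hGn hindep.symm
  have hmarkov := mutualInfo_le_of_condIndepFun hGN (hY.prodMk hGn) hG hcond
  linarith

/-- Paper's Theorem 1: with `G_sub = f ∘ G_N`, if `G_n ⟂ Y` and `(Y, G_n) ⟂ G_N | G`, then
`I[G_sub : G_n] ≤ I[G_N : G_n] ≤ I[G_N : G] - I[G_N : Y]`. -/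
theorem theorem1_perturbed_graph_info_bound
    {Ω : Type*} [MeasurableSpace Ω] [StandardBorelSpace Ω] [Nonempty Ω]
    (μ : Measure Ω) [IsProbabilityMeasure μ]
    {SG SY Sn SN Ssub : Type*}
    [Fintype SG] [Nonempty SG] [MeasurableSpace SG] [DiscreteMeasurableSpace SG]
    [Fintype SY] [Nonempty SY] [MeasurableSpace SY] [DiscreteMeasurableSpace SY]
    [Fintype Sn] [Nonempty Sn] [MeasurableSpace Sn] [DiscreteMeasurableSpace Sn]
    [Fintype SN] [Nonempty SN] [MeasurableSpace SN] [DiscreteMeasurableSpace SN]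
    [Fintype Ssub] [Nonempty Ssub] [MeasurableSpace Ssub] [DiscreteMeasurableSpace Ssub]
    (G : Ω → SG) (Y : Ω → SY) (Gn : Ω → Sn) (GN : Ω → SN) (f : SN → Ssub)
    (hG : Measurable G) (hY : Measurable Y) (hGn : Measurable Gn) (hGN : Measurable GN)
    (hf : Measurable f)
    (hindep : IndepFun Gn Y μ)
    (hcond : CondIndepFun (MeasurableSpace.comap G inferInstance) hG.comap_le
      (fun ω => (Y ω, Gn ω)) GN μ) :
    mutualInfo μ (f ∘ GN) Gn ≤ mutualInfo μ GN Gn ∧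
      mutualInfo μ GN Gn ≤ mutualInfo μ GN G - mutualInfo μ GN Y :=
  theorem1_perturbed_graph_info_bound_general μ G Y Gn GN f hG hY hGn hGN hf hindep hcond
end

section
/- Let m ≥ 1, μ_h ∈ ℝ, σ_h > 0, and let λ : Fin m → ℝ take values in {0, 1} and h : Fin m → ℝ. Let ε_1, …, ε_m be independent random variables each with law gaussianReal μ_h σ_h², set A = ∑_j (1 − λ_j)² and B = (∑_j λ_j (h_j − μ_h)) / σ_h, and assume A > 0. Then the law of the sum readout Z = ∑_j (λ_j · h_j + (1 − λ_j) · ε_j) is gaussianReal (∑_j λ_j h_j + (∑_j (1 − λ_j)) μ_h) (σ_h² A), and klDiv(law of Z, gaussianReal (m · μ_h) (m · σ_h²)) = −(1/2) log A + A/(2m) + B²/(2m) + (1/2) log m − 1/2. (The sum-readout case of the paper's Proposition 1, which the proposition covers by allowing the readout to be mean or sum.) -/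
/-!
Scaling, translating and adding independent real Gaussians keeps them Gaussian (means and
variances add), so the sum readout `Z = ∑ j, (λⱼ hⱼ + (1 - λⱼ) εⱼ)` is Gaussian with mean
`∑ λⱼ hⱼ + (∑ (1 - λⱼ)) μ_h` and variance `σ_h² ∑ (1 - λⱼ)²`. Between two real Gaussians the
log-likelihood ratio is a quadratic polynomial, so its expectation involves only the first two
moments and gives `KL(N(μ₁, v₁) ‖ N(μ₂, v₂)) = ½ log (v₂ / v₁) + (v₁ + (μ₁ - μ₂)²) / (2 v₂) - ½`;
substituting `v₂ / v₁ = m / A` and `μ₁ - μ₂ = σ_h B` gives the formula.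
-/

open MeasureTheory ProbabilityTheory Real
open scoped ENNReal NNReal Classical

/-- Kullback–Leibler divergence: `∫ log (dμ/dν) dμ` when `μ ≪ ν` and the log-likelihood
ratio is `μ`-integrable, and `+∞` otherwise. -/

noncomputable def klDiv {α : Type*} [MeasurableSpace α] (μ ν : Measure α) : ℝ≥0∞ :=
  if μ ≪ ν ∧ Integrable (llr μ ν) μ then ENNReal.ofReal (∫ x, llr μ ν x ∂μ) else ⊤

namespace ProbabilityTheory

lemma log_gaussianPDFReal (μ : ℝ) {v : ℝ≥0} (hv : v ≠ 0) (x : ℝ) :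
    log (gaussianPDFReal μ v x) = -log (2 * π * v) / 2 - (x - μ) ^ 2 / (2 * v) := by
  have hv' : (0 : ℝ) < v := by positivity
  rw [gaussianPDFReal, log_mul (by positivity) (exp_ne_zero _), log_inv,
    log_sqrt (by positivity), log_exp]
  ring

section Moments

variable {μ : ℝ} {v : ℝ≥0}

lemma integrable_sq_sub_gaussianReal (c : ℝ) :
    Integrable (fun x ↦ (x - c) ^ 2) (gaussianReal μ v) :=
  ((memLp_id_gaussianReal 2).sub (memLp_const c)).integrable_sq

lemma integral_sq_sub_gaussianReal (c : ℝ) :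
    ∫ x, (x - c) ^ 2 ∂gaussianReal μ v = v + (μ - c) ^ 2 := by
  have hvar := variance_eq_sub (memLp_id_gaussianReal (μ := μ - c) (v := v) 2)
  simp only [variance_id_gaussianReal, Pi.pow_apply, id_eq, integral_id_gaussianReal] at hvar
  calc ∫ x, (x - c) ^ 2 ∂gaussianReal μ v
      = ∫ y, y ^ 2 ∂(gaussianReal μ v).map (· - c) := by
        rw [integral_map (by fun_prop) (by fun_prop)]
    _ = v + (μ - c) ^ 2 := by rw [gaussianReal_map_sub_const, hvar]; ring

end Moments

section TwoGaussians

variable {μ₁ μ₂ : ℝ} {v₁ v₂ : ℝ≥0}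

lemma gaussianReal_eq_withDensity_div (hv₁ : v₁ ≠ 0) (hv₂ : v₂ ≠ 0) :
    gaussianReal μ₁ v₁ = (gaussianReal μ₂ v₂).withDensity
      fun x ↦ ENNReal.ofReal (gaussianPDFReal μ₁ v₁ x / gaussianPDFReal μ₂ v₂ x) := by
  rw [gaussianReal_of_var_ne_zero _ hv₁, gaussianReal_of_var_ne_zero _ hv₂,
    ← withDensity_mul _ (measurable_gaussianPDF _ _) (by fun_prop)]
  congr 1
  funext x
  simp only [Pi.mul_apply, gaussianPDF]
  rw [← ENNReal.ofReal_mul (gaussianPDFReal_nonneg _ _ _),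
    mul_div_cancel₀ _ (gaussianPDFReal_pos _ _ x hv₂).ne']

lemma gaussianReal_absolutelyContinuous_gaussianReal (hv₁ : v₁ ≠ 0) (hv₂ : v₂ ≠ 0) :
    gaussianReal μ₁ v₁ ≪ gaussianReal μ₂ v₂ :=
  (gaussianReal_absolutelyContinuous μ₁ hv₁).trans (gaussianReal_absolutelyContinuous' μ₂ hv₂)

lemma llr_gaussianReal (hv₁ : v₁ ≠ 0) (hv₂ : v₂ ≠ 0) :
    llr (gaussianReal μ₁ v₁) (gaussianReal μ₂ v₂) =ᵐ[gaussianReal μ₁ v₁]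
      fun x ↦ log (v₂ / v₁) / 2 + (x - μ₂) ^ 2 / (2 * v₂) - (x - μ₁) ^ 2 / (2 * v₁) := by
  have hρ : Measurable fun x ↦
      ENNReal.ofReal (gaussianPDFReal μ₁ v₁ x / gaussianPDFReal μ₂ v₂ x) := by fun_prop
  have hrn := Measure.rnDeriv_withDensity (gaussianReal μ₂ v₂) hρ
  rw [← gaussianReal_eq_withDensity_div hv₁ hv₂] at hrn
  filter_upwards [(gaussianReal_absolutelyContinuous_gaussianReal hv₁ hv₂).ae_le hrn] with x hx
  have hv₁' : (0 : ℝ) < v₁ := by positivity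
  have hv₂' : (0 : ℝ) < v₂ := by positivity
  simp only [llr_def, hx]
  rw [ENNReal.toReal_ofReal (div_nonneg (gaussianPDFReal_nonneg _ _ _)
      (gaussianPDFReal_nonneg _ _ _)),
    log_div (gaussianPDFReal_pos _ _ x hv₁).ne' (gaussianPDFReal_pos _ _ x hv₂).ne',
    log_gaussianPDFReal _ hv₁, log_gaussianPDFReal _ hv₂, log_div hv₂'.ne' hv₁'.ne',
    log_mul (by positivity) hv₁'.ne', log_mul (by positivity) hv₂'.ne']
  ring

lemma klDiv_gaussianReal (hv₁ : v₁ ≠ 0) (hv₂ : v₂ ≠ 0) :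
    klDiv (gaussianReal μ₁ v₁) (gaussianReal μ₂ v₂) =
      ENNReal.ofReal (log (v₂ / v₁) / 2 + (v₁ + (μ₁ - μ₂) ^ 2) / (2 * v₂) - 1 / 2) := by
  have hllr := llr_gaussianReal (μ₁ := μ₁) (μ₂ := μ₂) hv₁ hv₂
  have hint₁ := (integrable_sq_sub_gaussianReal (μ := μ₁) (v := v₁) μ₁).div_const (2 * v₁)
  have hint₂ := (integrable_sq_sub_gaussianReal (μ := μ₁) (v := v₁) μ₂).div_const (2 * v₂)
  have hint₀ := (integrable_const (log (v₂ / v₁) / 2)).fun_add hint₂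
  rw [klDiv, if_pos ⟨gaussianReal_absolutelyContinuous_gaussianReal hv₁ hv₂,
      (hint₀.sub hint₁).congr hllr.symm⟩, integral_congr_ae hllr, integral_sub hint₀ hint₁,
    integral_add (integrable_const _) hint₂, integral_const, probReal_univ, one_smul,
    integral_div, integral_div, integral_sq_sub_gaussianReal, integral_sq_sub_gaussianReal]
  have hv₁' : (0 : ℝ) < v₁ := by positivity
  congr 1
  field_simp
  ring

end TwoGaussians

section IndependentSum

variable {Ω ι : Type*} {mΩ : MeasurableSpace Ω} {P : Measure Ω}

lemma aemeasurable_of_map_eq_gaussianReal {Y : Ω → ℝ} {μ : ℝ} {v : ℝ≥0}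
    (hY : P.map Y = gaussianReal μ v) : AEMeasurable Y P :=
  AEMeasurable.of_map_ne_zero (by rw [hY]; exact NeZero.ne _)

variable [IsProbabilityMeasure P] {X : ι → Ω → ℝ} {μ : ι → ℝ} {v : ι → ℝ≥0}

lemma iIndepFun.map_sum_eq_gaussianReal (hind : iIndepFun X P)
    (hX : ∀ i, P.map (X i) = gaussianReal (μ i) (v i)) (s : Finset ι) :
    P.map (∑ i ∈ s, X i) = gaussianReal (∑ i ∈ s, μ i) (∑ i ∈ s, v i) := by
  classical
  have hXm : ∀ i, AEMeasurable (X i) P := fun i ↦ aemeasurable_of_map_eq_gaussianReal (hX i)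
  induction s using Finset.induction_on with
  | empty =>
    rw [Finset.sum_empty, Finset.sum_empty, Finset.sum_empty, gaussianReal_zero_var]
    exact (Measure.map_const P 0).trans (by simp)
  | insert i s hi ih =>
    rw [Finset.sum_insert hi, Finset.sum_insert hi, Finset.sum_insert hi]
    exact gaussianReal_add_gaussianReal_of_indepFun
      (hind.indepFun_finsetSum_of_notMem₀ hXm hi).symm (hX i) ih

lemma iIndepFun.map_sum_const_add_mul_eq_gaussianReal (hind : iIndepFun X P)
    (hX : ∀ i, P.map (X i) = gaussianReal (μ i) (v i)) (a b : ι → ℝ) (s : Finset ι) :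
    P.map (fun ω ↦ ∑ i ∈ s, (a i + b i * X i ω)) =
      gaussianReal (∑ i ∈ s, (b i * μ i + a i)) (∑ i ∈ s, (b i ^ 2).toNNReal * v i) := by
  have hY : ∀ i, P.map (fun ω ↦ a i + b i * X i ω) =
      gaussianReal (b i * μ i + a i) ((b i ^ 2).toNNReal * v i) := fun i ↦ by
    rw [Real.toNNReal_of_nonneg (sq_nonneg _)]
    exact (gaussianReal_const_add (gaussianReal_const_mul
      ⟨aemeasurable_of_map_eq_gaussianReal (hX i), hX i⟩ (b i)) (a i)).map_eq
  have hsum := (hind.comp (fun i x ↦ a i + b i * x) (fun i ↦ by fun_prop)).map_sum_eq_gaussianReal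
    hY s
  rwa [Finset.sum_fn] at hsum

end IndependentSum

end ProbabilityTheory

theorem law_and_klDiv_sum_readout_general
    {Ω : Type*} [MeasurableSpace Ω] (P : Measure Ω) [IsProbabilityMeasure P]
    (m : ℕ) (hm : 1 ≤ m) (μh σh : ℝ) (hσ : 0 < σh)
    (lam : Fin m → ℝ) (h : Fin m → ℝ)
    (ε : Fin m → Ω → ℝ)
    (hlaw : ∀ j, Measure.map (ε j) P = gaussianReal μh (σh ^ 2).toNNReal)
    (hindep : iIndepFun ε P)
    (A B : ℝ)
    (hA : A = ∑ j, (1 - lam j) ^ 2) (hApos : 0 < A)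
    (hB : B = (∑ j, lam j * (h j - μh)) / σh) :
    Measure.map (fun ω => ∑ j, (lam j * h j + (1 - lam j) * ε j ω)) P =
        gaussianReal (∑ j, lam j * h j + (∑ j, (1 - lam j)) * μh) (σh ^ 2 * A).toNNReal ∧
      klDiv (Measure.map (fun ω => ∑ j, (lam j * h j + (1 - lam j) * ε j ω)) P)
          (gaussianReal ((m : ℝ) * μh) ((m : ℝ) * σh ^ 2).toNNReal) =
        ENNReal.ofReal (-(1 / 2) * Real.log A + A / (2 * m) + B ^ 2 / (2 * m)
          + (1 / 2) * Real.log m - 1 / 2) := by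
  have hlawZ : Measure.map (fun ω => ∑ j, (lam j * h j + (1 - lam j) * ε j ω)) P =
      gaussianReal (∑ j, lam j * h j + (∑ j, (1 - lam j)) * μh) (σh ^ 2 * A).toNNReal := by
    rw [hindep.map_sum_const_add_mul_eq_gaussianReal hlaw]
    congr 1
    · rw [Finset.sum_mul, ← Finset.sum_add_distrib]
      exact Finset.sum_congr rfl fun j _ ↦ by ring
    · ext
      rw [NNReal.coe_sum, Real.coe_toNNReal _ (by positivity), hA, Finset.mul_sum]
      exact Finset.sum_congr rfl fun j _ ↦ by
        rw [NNReal.coe_mul, Real.coe_toNNReal _ (sq_nonneg _),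
          Real.coe_toNNReal _ (sq_nonneg σh), mul_comm]
  have hm' : (0 : ℝ) < m := by exact_mod_cast hm
  have hmean : ∑ j, lam j * h j + (∑ j, (1 - lam j)) * μh - m * μh = σh * B := by
    rw [hB, mul_div_cancel₀ _ hσ.ne']
    simp only [Finset.sum_sub_distrib, Finset.sum_const, Finset.card_univ, Fintype.card_fin,
      nsmul_eq_mul, mul_one, mul_sub, ← Finset.sum_mul]
    ring
  refine ⟨hlawZ, ?_⟩
  rw [hlawZ, klDiv_gaussianReal (Real.toNNReal_pos.mpr (by positivity)).ne'
      (Real.toNNReal_pos.mpr (by positivity)).ne', Real.coe_toNNReal _ (by positivity),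
    Real.coe_toNNReal _ (by positivity), hmean,
    show m * σh ^ 2 / (σh ^ 2 * A) = m / A by field_simp, log_div hm'.ne' hApos.ne']
  congr 1
  field_simp
  ring

/-- The sum-readout case of the paper's Proposition 1: the law of the sum readout
`Z = ∑ j, (lam j * h j + (1 - lam j) * ε j)` is
`N(∑ j lam j h j + (∑ j (1 - lam j)) μh, σh² A)`, and its KL divergence to the prior
`N(m μh, m σh²)` equals `-½ log A + A/(2m) + B²/(2m) + ½ log m - ½`. -/
theorem law_and_klDiv_sum_readout
    {Ω : Type*} [MeasurableSpace Ω] (P : Measure Ω) [IsProbabilityMeasure P]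
    (m : ℕ) (hm : 1 ≤ m) (μh σh : ℝ) (hσ : 0 < σh)
    (lam : Fin m → ℝ) (hlam : ∀ j, lam j = 0 ∨ lam j = 1) (h : Fin m → ℝ)
    (ε : Fin m → Ω → ℝ) (hε : ∀ j, Measurable (ε j))
    (hlaw : ∀ j, Measure.map (ε j) P = gaussianReal μh (σh ^ 2).toNNReal)
    (hindep : iIndepFun ε P)
    (A B : ℝ)
    (hA : A = ∑ j, (1 - lam j) ^ 2) (hApos : 0 < A)
    (hB : B = (∑ j, lam j * (h j - μh)) / σh) :
    Measure.map (fun ω => ∑ j, (lam j * h j + (1 - lam j) * ε j ω)) P =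
        gaussianReal (∑ j, lam j * h j + (∑ j, (1 - lam j)) * μh) (σh ^ 2 * A).toNNReal ∧
      klDiv (Measure.map (fun ω => ∑ j, (lam j * h j + (1 - lam j) * ε j ω)) P)
          (gaussianReal ((m : ℝ) * μh) ((m : ℝ) * σh ^ 2).toNNReal) =
        ENNReal.ofReal (-(1 / 2) * Real.log A + A / (2 * m) + B ^ 2 / (2 * m)
          + (1 / 2) * Real.log m - 1 / 2) :=
  law_and_klDiv_sum_readout_general P m hm μh σh hσ lam h ε hlaw hindep A B hA hApos hB
end
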